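/- Let E be a finite-dimensional real inner product space, Q ⊆ E an open convex set, p ≥ 1 an integer, and V : Q → E a p-times continuously differentiable map whose p-th derivative is Hölder continuous of degree ν ∈ [0, 1] with constant H > 0, i.e. ‖D^pV(x) − D^pV(y)‖ ≤ H ‖x − y‖^ν for all x, y ∈ Q (operator norm of p-linear maps). Define σ̂₀ = κ_V and, for p ≥ 2, σ̂_{p−1}(r) = (1/(p−2)!) ∫₀^r (r−t)^{p−2} κ_{D^{p−1}V}(t) dt. Then σ̂_{p−1}(r) ≤ (2^{1−ν} / ((1+ν)(2+ν)···(p+ν))) · H · r^{p+ν} for all r ≥ 0. -/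

import Mathlib

open Set

variable {E : Type*} [NormedAddCommGroup E] [InnerProductSpace ℝ E] [FiniteDimensional ℝ E]

/-- The defining set of the global curvature bound `κ_{D^q V}(r)` of the `q`-th derivative
of `V` on `Q`. -/
def curvSet (Q : Set E) (V : E → E) (q : ℕ) (r : ℝ) : Set ℝ :=
  {v | ∃ x ∈ Q, ∃ y ∈ Q, ∃ t ∈ Ioo (0 : ℝ) 1, ‖y - x‖ ≤ r ∧
    v = ‖t • iteratedFDerivWithin ℝ q V Q y + (1 - t) • iteratedFDerivWithin ℝ q V Q x
        - iteratedFDerivWithin ℝ q V Q (x + t • (y - x))‖ / (t * (1 - t))}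

/-- The global curvature bound `κ_{D^q V}(r)` of the `q`-th derivative of `V` on `Q`. -/
noncomputable def curv (Q : Set E) (V : E → E) (q : ℕ) (r : ℝ) : ℝ :=
  sSup (curvSet Q V q r)

open intervalIntegral


lemma aux_two_rpow {ν : ℝ} (h0 : 0 ≤ ν) (h1 : ν ≤ 1) {t : ℝ} (ht0 : 0 ≤ t) (ht1 : t ≤ 1) :
    t ^ ν + (1 - t) ^ ν ≤ 2 ^ (1 - ν) := by
  have hc := (Real.concaveOn_rpow h0 h1).2 (mem_Ici.2 ht0) (mem_Ici.2 (by linarith : (0:ℝ) ≤ 1 - t))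
    (by norm_num : (0:ℝ) ≤ 1/2) (by norm_num : (0:ℝ) ≤ 1/2) (by norm_num)
  simp only [smul_eq_mul] at hc
  have he : (1/2 : ℝ) * t + (1/2 : ℝ) * (1 - t) = 1/2 := by ring
  rw [he] at hc
  have h2 : ((1:ℝ)/2) ^ ν = (2 ^ ν)⁻¹ := by
    rw [one_div, Real.inv_rpow (by norm_num)]
  have h3 : (2:ℝ) ^ (1 - ν) = 2 * (2 ^ ν)⁻¹ := by
    rw [show (1 - ν) = 1 + (-ν) by ring, Real.rpow_add (by norm_num), Real.rpow_one,
      Real.rpow_neg (by norm_num)]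
  rw [h3, ← h2]
  linarith

lemma aux_int_rpow_right {ν : ℝ} (hν : 0 ≤ ν) (a b : ℝ) :
    ∫ s in a..b, (s - a) ^ ν = (b - a) ^ (ν + 1) / (ν + 1) := by
  rw [intervalIntegral.integral_comp_sub_right (fun u : ℝ => u ^ ν) a, sub_self,
    integral_rpow (Or.inl (by linarith))]
  rw [Real.zero_rpow (by linarith)]
  ring

lemma aux_int_rpow_left {ν : ℝ} (hν : 0 ≤ ν) (a b : ℝ) :
    ∫ s in a..b, (b - s) ^ ν = (b - a) ^ (ν + 1) / (ν + 1) := by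
  rw [intervalIntegral.integral_comp_sub_left (fun u : ℝ => u ^ ν) b, sub_self,
    integral_rpow (Or.inl (by linarith))]
  rw [Real.zero_rpow (by linarith)]
  ring

lemma chord_bound {F : Type*} [NormedAddCommGroup F] [NormedSpace ℝ F] [CompleteSpace F]
    (φ φ' : ℝ → F) (hderiv : ∀ s ∈ Icc (0:ℝ) 1, HasDerivAt φ (φ' s) s)
    (hcont : ContinuousOn φ' (Icc (0:ℝ) 1))
    (C ν : ℝ) (hC : 0 ≤ C) (hν0 : 0 ≤ ν)
    (hHold : ∀ s ∈ Icc (0:ℝ) 1, ∀ u ∈ Icc (0:ℝ) 1, ‖φ' s - φ' u‖ ≤ C * |s - u| ^ ν)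
    (t : ℝ) (ht : t ∈ Ioo (0:ℝ) 1) :
    ‖t • φ 1 + (1 - t) • φ 0 - φ t‖
      ≤ C * ((1 - t) * t ^ (1 + ν) + t * (1 - t) ^ (1 + ν)) / (1 + ν) := by
  obtain ⟨ht0, ht1⟩ := ht
  have htI : t ∈ Icc (0:ℝ) 1 := ⟨ht0.le, ht1.le⟩
  have hsub1 : uIcc t 1 ⊆ Icc (0:ℝ) 1 := by
    rw [uIcc_of_le ht1.le]; exact Icc_subset_Icc ht0.le le_rfl
  have hsub0 : uIcc (0:ℝ) t ⊆ Icc (0:ℝ) 1 := by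
    rw [uIcc_of_le ht0.le]; exact Icc_subset_Icc le_rfl ht1.le
  have hint1 : IntervalIntegrable φ' MeasureTheory.volume t 1 :=
    (hcont.mono hsub1).intervalIntegrable
  have hint0 : IntervalIntegrable φ' MeasureTheory.volume 0 t :=
    (hcont.mono hsub0).intervalIntegrable
  have hI1 : ∫ s in t..1, φ' s = φ 1 - φ t :=
    intervalIntegral.integral_eq_sub_of_hasDerivAt
      (fun s hs => hderiv s (hsub1 hs)) hint1
  have hI0 : ∫ s in (0:ℝ)..t, φ' s = φ t - φ 0 :=
    intervalIntegral.integral_eq_sub_of_hasDerivAt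
      (fun s hs => hderiv s (hsub0 hs)) hint0
  -- rewrite the chord defect
  have key : t • φ 1 + (1 - t) • φ 0 - φ t
      = t • (∫ s in t..1, (φ' s - φ' t)) - (1 - t) • (∫ s in (0:ℝ)..t, (φ' s - φ' t)) := by
    have e1 : ∫ s in t..1, (φ' s - φ' t) = (φ 1 - φ t) - (1 - t) • φ' t := by
      rw [intervalIntegral.integral_sub hint1 intervalIntegrable_const, hI1,
        intervalIntegral.integral_const]
    have e0 : ∫ s in (0:ℝ)..t, (φ' s - φ' t) = (φ t - φ 0) - t • φ' t := by
      rw [intervalIntegral.integral_sub hint0 intervalIntegrable_const, hI0,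
        intervalIntegral.integral_const, sub_zero]
    rw [e1, e0]
    rw [smul_sub, smul_sub, smul_sub, smul_sub, smul_smul, smul_smul]
    module
  rw [key]
  have hb1 : ‖∫ s in t..1, (φ' s - φ' t)‖ ≤ C * (1 - t) ^ (ν + 1) / (ν + 1) := by
    have hcont1 : ContinuousOn (fun s => ‖φ' s - φ' t‖) (uIcc t 1) :=
      (((hcont.mono hsub1).sub continuousOn_const).norm)
    have hcont2 : ContinuousOn (fun s : ℝ => C * (s - t) ^ ν) (uIcc t 1) := by
      apply continuousOn_const.mul
      exact ((Real.continuous_rpow_const hν0).comp (continuous_sub_right t)).continuousOn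
    calc ‖∫ s in t..1, (φ' s - φ' t)‖ ≤ ∫ s in t..1, ‖φ' s - φ' t‖ :=
          intervalIntegral.norm_integral_le_integral_norm ht1.le
      _ ≤ ∫ s in t..1, C * (s - t) ^ ν := by
          apply intervalIntegral.integral_mono_on ht1.le hcont1.intervalIntegrable
            hcont2.intervalIntegrable
          intro s hs
          have := hHold s (hsub1 (by rw [uIcc_of_le ht1.le]; exact hs)) t htI
          rwa [abs_of_nonneg (by linarith [hs.1] : (0:ℝ) ≤ s - t)] at this
      _ = C * (1 - t) ^ (ν + 1) / (ν + 1) := by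
          rw [intervalIntegral.integral_const_mul, aux_int_rpow_right hν0]
          ring
  have hb0 : ‖∫ s in (0:ℝ)..t, (φ' s - φ' t)‖ ≤ C * t ^ (ν + 1) / (ν + 1) := by
    have hcont1 : ContinuousOn (fun s => ‖φ' s - φ' t‖) (uIcc (0:ℝ) t) :=
      (((hcont.mono hsub0).sub continuousOn_const).norm)
    have hcont2 : ContinuousOn (fun s : ℝ => C * (t - s) ^ ν) (uIcc (0:ℝ) t) := by
      apply continuousOn_const.mul
      exact ((Real.continuous_rpow_const hν0).comp (continuous_const.sub continuous_id)).continuousOn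
    calc ‖∫ s in (0:ℝ)..t, (φ' s - φ' t)‖ ≤ ∫ s in (0:ℝ)..t, ‖φ' s - φ' t‖ :=
          intervalIntegral.norm_integral_le_integral_norm ht0.le
      _ ≤ ∫ s in (0:ℝ)..t, C * (t - s) ^ ν := by
          apply intervalIntegral.integral_mono_on ht0.le hcont1.intervalIntegrable
            hcont2.intervalIntegrable
          intro s hs
          have := hHold s (hsub0 (by rw [uIcc_of_le ht0.le]; exact hs)) t htI
          rwa [abs_sub_comm, abs_of_nonneg (by linarith [hs.2] : (0:ℝ) ≤ t - s)] at this
      _ = C * t ^ (ν + 1) / (ν + 1) := by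
          rw [intervalIntegral.integral_const_mul, aux_int_rpow_left hν0, sub_zero]
          ring
  have hν1 : (0:ℝ) < 1 + ν := by linarith
  calc ‖t • (∫ s in t..1, (φ' s - φ' t)) - (1 - t) • (∫ s in (0:ℝ)..t, (φ' s - φ' t))‖
      ≤ ‖t • (∫ s in t..1, (φ' s - φ' t))‖ + ‖(1 - t) • (∫ s in (0:ℝ)..t, (φ' s - φ' t))‖ :=
        norm_sub_le _ _
    _ = t * ‖∫ s in t..1, (φ' s - φ' t)‖ + (1 - t) * ‖∫ s in (0:ℝ)..t, (φ' s - φ' t)‖ := by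
        rw [norm_smul, norm_smul, Real.norm_eq_abs, Real.norm_eq_abs,
          abs_of_nonneg ht0.le, abs_of_nonneg (by linarith : (0:ℝ) ≤ 1 - t)]
    _ ≤ t * (C * (1 - t) ^ (ν + 1) / (ν + 1)) + (1 - t) * (C * t ^ (ν + 1) / (ν + 1)) :=
        add_le_add (mul_le_mul_of_nonneg_left hb1 ht0.le)
          (mul_le_mul_of_nonneg_left hb0 (by linarith))
    _ = C * ((1 - t) * t ^ (1 + ν) + t * (1 - t) ^ (1 + ν)) / (1 + ν) := by
        rw [add_comm 1 ν]; ring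

lemma mem_curvSet_le
    (Q : Set E) (hQo : IsOpen Q) (hQc : Convex ℝ Q)
    (q : ℕ) (V : E → E) (hV : ContDiffOn ℝ (q+1) V Q)
    (ν H : ℝ) (hν : ν ∈ Icc (0:ℝ) 1) (hH : 0 ≤ H)
    (hHolder : ∀ x ∈ Q, ∀ y ∈ Q,
      ‖iteratedFDerivWithin ℝ (q+1) V Q x - iteratedFDerivWithin ℝ (q+1) V Q y‖ ≤ H * ‖x - y‖ ^ ν)
    (r : ℝ) (hr : 0 ≤ r) :
    ∀ v ∈ curvSet Q V q r, v ≤ 2 ^ (1 - ν) / (1 + ν) * H * r ^ (1 + ν) := by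
  obtain ⟨hν0, hν1⟩ := hν
  rintro v ⟨x, hx, y, hy, t, ht, hxy, rfl⟩
  obtain ⟨ht0, ht1⟩ := ht
  set h : E := y - x with hh
  have hmem : ∀ s ∈ Icc (0:ℝ) 1, x + s • h ∈ Q := by
    intro s hs
    have h2 := hQc hx hy (by linarith [hs.2] : (0:ℝ) ≤ 1 - s) hs.1 (by ring)
    have h3 : (1 - s) • x + s • y = x + s • h := by rw [hh]; module
    rwa [h3] at h2
  have hT := hV.ftaylorSeriesWithin hQo.uniqueDiffOn
  set φ : ℝ → ContinuousMultilinearMap ℝ (fun _ : Fin q => E) E :=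
    fun s => iteratedFDerivWithin ℝ q V Q (x + s • h) with hφ
  set φ' : ℝ → ContinuousMultilinearMap ℝ (fun _ : Fin q => E) E :=
    fun s => (iteratedFDerivWithin ℝ (q+1) V Q (x + s • h)).curryLeft h with hφ'
  have hderiv : ∀ s ∈ Icc (0:ℝ) 1, HasDerivAt φ (φ' s) s := by
    intro s hs
    have hF : HasFDerivAt (fun w => iteratedFDerivWithin ℝ q V Q w)
        (iteratedFDerivWithin ℝ (q+1) V Q (x + s • h)).curryLeft (x + s • h) :=
      (hT.fderivWithin q (by exact_mod_cast Nat.lt_succ_self q) _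
        (hmem s hs)).hasFDerivAt (hQo.mem_nhds (hmem s hs))
    have hc : HasDerivAt (fun s : ℝ => x + s • h) h s := by
      simpa using ((hasDerivAt_id s).smul_const h).const_add x
    exact hF.comp_hasDerivAt s hc
  have hcont : ContinuousOn φ' (Icc (0:ℝ) 1) := by
    have h1 : ContinuousOn (fun w => iteratedFDerivWithin ℝ (q+1) V Q w) Q :=
      hT.cont (q+1) (by exact_mod_cast le_rfl)
    have h2 : Continuous fun s : ℝ => x + s • h :=
      continuous_const.add (continuous_id.smul continuous_const)
    have h3 : Continuous
        (fun A : ContinuousMultilinearMap ℝ (fun _ : Fin (q+1) => E) E => A.curryLeft h) :=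
      (ContinuousLinearMap.apply ℝ _ h).continuous.comp
        (continuousMultilinearCurryLeftEquiv ℝ (fun _ : Fin (q+1) => E) E).continuous
    exact h3.comp_continuousOn (h1.comp h2.continuousOn (fun s hs => hmem s hs))
  have hdiff : ∀ (A B : ContinuousMultilinearMap ℝ (fun _ : Fin (q+1) => E) E),
      ‖A.curryLeft h - B.curryLeft h‖ ≤ ‖A - B‖ * ‖h‖ := by
    intro A B
    have h2 : (A - B).curryLeft = A.curryLeft - B.curryLeft :=
      (continuousMultilinearCurryLeftEquiv ℝ (fun _ : Fin (q+1) => E) E).map_sub A B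
    have h4 : A.curryLeft h - B.curryLeft h = (A - B).curryLeft h := by
      rw [h2, ContinuousLinearMap.sub_apply]
    rw [h4]
    calc ‖(A - B).curryLeft h‖ ≤ ‖(A - B).curryLeft‖ * ‖h‖ := (A - B).curryLeft.le_opNorm h
      _ = ‖A - B‖ * ‖h‖ := by rw [ContinuousMultilinearMap.curryLeft_norm]
  set C : ℝ := H * ‖h‖ ^ (1 + ν) with hC
  have hCnn : 0 ≤ C := mul_nonneg hH (Real.rpow_nonneg (norm_nonneg _) _)
  have hHold : ∀ s ∈ Icc (0:ℝ) 1, ∀ u ∈ Icc (0:ℝ) 1, ‖φ' s - φ' u‖ ≤ C * |s - u| ^ ν := by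
    intro s _ u _
    calc ‖φ' s - φ' u‖
        ≤ ‖iteratedFDerivWithin ℝ (q+1) V Q (x + s • h)
            - iteratedFDerivWithin ℝ (q+1) V Q (x + u • h)‖ * ‖h‖ := hdiff _ _
      _ ≤ (H * ‖(x + s • h) - (x + u • h)‖ ^ ν) * ‖h‖ := by
          apply mul_le_mul_of_nonneg_right _ (norm_nonneg _)
          exact hHolder _ (hmem s ‹_›) _ (hmem u ‹_›)
      _ = C * |s - u| ^ ν := by
          have e1 : (x + s • h) - (x + u • h) = (s - u) • h := by module
          rw [e1, norm_smul, Real.norm_eq_abs,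
            Real.mul_rpow (abs_nonneg _) (norm_nonneg _), hC,
            Real.rpow_add' (norm_nonneg _) (by linarith : (1:ℝ) + ν ≠ 0), Real.rpow_one]
          ring
  have hchord := chord_bound φ φ' hderiv hcont C ν hCnn hν0 hHold t ⟨ht0, ht1⟩
  have hφ1 : φ 1 = iteratedFDerivWithin ℝ q V Q y := by
    rw [hφ]; simp [hh]
  have hφ0 : φ 0 = iteratedFDerivWithin ℝ q V Q x := by
    rw [hφ]; simp
  have hφt : φ t = iteratedFDerivWithin ℝ q V Q (x + t • (y - x)) := rfl
  rw [← hφ1, ← hφ0, ← hφt]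
  have htt : 0 < t * (1 - t) := mul_pos ht0 (by linarith)
  have hsplit : (1 - t) * t ^ (1 + ν) + t * (1 - t) ^ (1 + ν)
      = (t * (1 - t)) * (t ^ ν + (1 - t) ^ ν) := by
    rw [Real.rpow_add ht0, Real.rpow_add (by linarith : (0:ℝ) < 1 - t),
      Real.rpow_one, Real.rpow_one]
    ring
  have step1 : ‖t • φ 1 + (1 - t) • φ 0 - φ t‖ / (t * (1 - t))
      ≤ C * (t ^ ν + (1 - t) ^ ν) / (1 + ν) := by
    rw [div_le_iff₀ htt]
    calc ‖t • φ 1 + (1 - t) • φ 0 - φ t‖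
        ≤ C * ((1 - t) * t ^ (1 + ν) + t * (1 - t) ^ (1 + ν)) / (1 + ν) := hchord
      _ = C * (t ^ ν + (1 - t) ^ ν) / (1 + ν) * (t * (1 - t)) := by
          rw [hsplit]; ring
  refine step1.trans ?_
  have hCr : C ≤ H * r ^ (1 + ν) := by
    apply mul_le_mul_of_nonneg_left _ hH
    exact Real.rpow_le_rpow (norm_nonneg _) hxy (by linarith)
  have h2ν : t ^ ν + (1 - t) ^ ν ≤ 2 ^ (1 - ν) := aux_two_rpow hν0 hν1 ht0.le ht1.le
  calc C * (t ^ ν + (1 - t) ^ ν) / (1 + ν)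
      ≤ (H * r ^ (1 + ν)) * (2 ^ (1 - ν)) / (1 + ν) := by
        have hS : 0 ≤ t ^ ν + (1 - t) ^ ν :=
          add_nonneg (Real.rpow_nonneg ht0.le _) (Real.rpow_nonneg (by linarith) _)
        have hHr : 0 ≤ H * r ^ (1 + ν) := mul_nonneg hH (Real.rpow_nonneg hr _)
        apply div_le_div_of_nonneg_right ?_ (by linarith)
        exact mul_le_mul hCr h2ν hS hHr
      _ = 2 ^ (1 - ν) / (1 + ν) * H * r ^ (1 + ν) := by ring

lemma beta_int : ∀ (n : ℕ) (a : ℝ), 1 ≤ a → ∀ r : ℝ, 0 ≤ r →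
    ∫ t in (0:ℝ)..r, (r - t) ^ n * t ^ a
      = (n.factorial : ℝ) / (∏ i ∈ Finset.range (n+1), (a + 1 + i)) * r ^ (a + n + 1) := by
  intro n
  induction n with
  | zero =>
    intro a ha r hr
    simp only [pow_zero, one_mul]
    rw [integral_rpow (Or.inl (by linarith : (-1:ℝ) < a)), Real.zero_rpow (by linarith),
      Finset.prod_range_one, Nat.factorial_zero,
      show a + ((0:ℕ):ℝ) + 1 = a + 1 by push_cast; ring,
      show a + 1 + ((0:ℕ):ℝ) = a + 1 by push_cast; ring]
    push_cast
    ring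
  | succ n ih =>
    intro a ha r hr
    have ha1 : (0:ℝ) < a + 1 := by linarith
    -- integration by parts via FTC
    set g : ℝ → ℝ := fun t => -(r - t) ^ (n+1) * t ^ (a+1) / (a+1) with hg
    have hderiv : ∀ t : ℝ, HasDerivAt g
        ((n+1 : ℝ) * (r - t) ^ n * t ^ (a+1) / (a+1) - (r - t) ^ (n+1) * t ^ a) t := by
      intro t
      have h1 : HasDerivAt (fun t : ℝ => -(r - t) ^ (n+1)) ((n+1 : ℝ) * (r - t) ^ n) t := by
        have := ((hasDerivAt_id t).const_sub r).fun_pow (n+1)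
        simpa using this.fun_neg
      have h2 : HasDerivAt (fun t : ℝ => t ^ (a+1)) ((a+1) * t ^ a) t := by
        have := Real.hasDerivAt_rpow_const (x := t) (p := a+1) (Or.inr (by linarith))
        simpa [show a + 1 - 1 = a by ring] using this
      have := (h1.fun_mul h2).div_const (a+1)
      refine this.congr_deriv ?_
      field_simp
      ring
    have hc1 : Continuous fun t : ℝ => (n+1 : ℝ) * (r - t) ^ n * t ^ (a+1) / (a+1) := by
      apply Continuous.div_const
      exact (continuous_const.mul ((continuous_const.sub continuous_id).pow n)).mul
        (Real.continuous_rpow_const (by linarith))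
    have hc2 : Continuous fun t : ℝ => (r - t) ^ (n+1) * t ^ a := by
      exact ((continuous_const.sub continuous_id).pow (n+1)).mul
        (Real.continuous_rpow_const (by linarith))
    have hFTC : ∫ t in (0:ℝ)..r,
        ((n+1 : ℝ) * (r - t) ^ n * t ^ (a+1) / (a+1) - (r - t) ^ (n+1) * t ^ a) = g r - g 0 :=
      intervalIntegral.integral_eq_sub_of_hasDerivAt (fun t _ => hderiv t)
        ((hc1.sub hc2).intervalIntegrable _ _)
    have hg0 : g r - g 0 = 0 := by
      simp [hg, Real.zero_rpow (by linarith : a + 1 ≠ 0)]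
    rw [intervalIntegral.integral_sub (hc1.intervalIntegrable _ _) (hc2.intervalIntegrable _ _),
      hg0] at hFTC
    have hmain : ∫ t in (0:ℝ)..r, (r - t) ^ (n+1) * t ^ a
        = ∫ t in (0:ℝ)..r, (n+1 : ℝ) * (r - t) ^ n * t ^ (a+1) / (a+1) := by linarith
    have hrw : (fun t : ℝ => (n+1 : ℝ) * (r - t) ^ n * t ^ (a+1) / (a+1))
        = fun t : ℝ => ((n+1 : ℝ) / (a+1)) * ((r - t) ^ n * t ^ (a+1)) := by
      funext t; ring
    rw [hmain, hrw, intervalIntegral.integral_const_mul, ih (a+1) (by linarith) r hr]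
    have hprod : ∏ i ∈ Finset.range (n+1+1), (a + 1 + (i:ℝ))
        = (a + 1) * ∏ i ∈ Finset.range (n+1), (a + 1 + 1 + (i:ℝ)) := by
      have hcg : ∀ i ∈ Finset.range (n+1), (a + 1 + (((i+1):ℕ):ℝ)) = (a + 1 + 1 + (i:ℝ)) :=
        fun i _ => by push_cast; ring
      rw [Finset.prod_range_succ', Finset.prod_congr rfl hcg]
      push_cast
      ring
    rw [hprod]
    have hexp : a + 1 + (n:ℝ) + 1 = a + ((n:ℝ)+1) + 1 := by ring
    rw [hexp]
    have hppos : (0:ℝ) < ∏ i ∈ Finset.range (n+1), (a + 1 + 1 + (i:ℝ)) := by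
      apply Finset.prod_pos
      intro i _
      have : (0:ℝ) ≤ (i:ℝ) := Nat.cast_nonneg i
      linarith
    rw [Nat.factorial_succ]
    push_cast
    field_simp


lemma curvSet_mono (Q : Set E) (V : E → E) (q : ℕ) {r₁ r₂ : ℝ} (h : r₁ ≤ r₂) :
    curvSet Q V q r₁ ⊆ curvSet Q V q r₂ := by
  rintro v ⟨x, hx, y, hy, t, ht, hxy, rfl⟩
  exact ⟨x, hx, y, hy, t, ht, hxy.trans h, rfl⟩

lemma curvSet_nonneg (Q : Set E) (V : E → E) (q : ℕ) (r : ℝ) :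
    ∀ v ∈ curvSet Q V q r, 0 ≤ v := by
  rintro v ⟨x, hx, y, hy, t, ht, hxy, rfl⟩
  apply div_nonneg (norm_nonneg _)
  nlinarith [ht.1, ht.2]

/-- If the `p`-th derivative of `V` is `ν`-Hölder continuous with
constant `H > 0`, then the integral smoothing satisfies
`σ̂_{p−1}(r) ≤ (2^{1−ν} / ((1+ν)(2+ν)⋯(p+ν))) H r^{p+ν}`. -/
theorem sigmaHat_le_of_holder
    (Q : Set E) (hQo : IsOpen Q) (hQc : Convex ℝ Q)
    (p : ℕ) (hp : 1 ≤ p) (V : E → E) (hV : ContDiffOn ℝ p V Q)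
    (ν H : ℝ) (hν : ν ∈ Set.Icc (0 : ℝ) 1) (hH : 0 < H)
    (hHolder : ∀ x ∈ Q, ∀ y ∈ Q,
      ‖iteratedFDerivWithin ℝ p V Q x - iteratedFDerivWithin ℝ p V Q y‖ ≤ H * ‖x - y‖ ^ ν)
    (σ : ℝ → ℝ)
    (hσ₁ : p = 1 → ∀ r : ℝ, σ r = curv Q V 0 r)
    (hσ₂ : 2 ≤ p → ∀ r : ℝ, σ r = (1 / (Nat.factorial (p - 2) : ℝ)) *
      ∫ t in (0 : ℝ)..r, (r - t) ^ (p - 2) * curv Q V (p - 1) t) :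
    ∀ r : ℝ, 0 ≤ r →
      σ r ≤ (2 ^ (1 - ν) / ∏ i ∈ Finset.range p, ((i : ℝ) + 1 + ν)) * H * r ^ ((p : ℝ) + ν) := by
  intro r hr
  have hν0 := hν.1
  have hν1 := hν.2
  have h2pos : (0:ℝ) < 2 ^ (1 - ν) := Real.rpow_pos_of_pos two_pos _
  have h1ν : (0:ℝ) < 1 + ν := by linarith
  rcases lt_or_ge p 2 with hlt | hge
  · -- p = 1
    have hp1 : p = 1 := by omega
    subst hp1
    rw [hσ₁ rfl r]
    have hcore := mem_curvSet_le Q hQo hQc 0 V (by exact_mod_cast hV) ν H hν hH.le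
      (by exact_mod_cast hHolder) r hr
    have hnn : (0:ℝ) ≤ 2 ^ (1 - ν) / (1 + ν) * H * r ^ (1 + ν) :=
      mul_nonneg (mul_nonneg (div_nonneg h2pos.le h1ν.le) hH.le) (Real.rpow_nonneg hr _)
    calc curv Q V 0 r ≤ 2 ^ (1 - ν) / (1 + ν) * H * r ^ (1 + ν) := Real.sSup_le hcore hnn
      _ = (2 ^ (1 - ν) / ∏ i ∈ Finset.range 1, ((i : ℝ) + 1 + ν)) * H * r ^ ((1 : ℕ) + (ν:ℝ)) := by
          rw [Finset.prod_range_one]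
          norm_num
  · -- p ≥ 2
    obtain ⟨m, rfl⟩ : ∃ m, p = m + 2 := ⟨p - 2, by omega⟩
    rw [hσ₂ hge r]
    have hsub2 : m + 2 - 2 = m := by omega
    have hsub1 : m + 2 - 1 = m + 1 := by omega
    rw [hsub2, hsub1]
    set C₁ : ℝ := 2 ^ (1 - ν) / (1 + ν) * H with hC₁
    have hC₁nn : 0 ≤ C₁ := mul_nonneg (div_nonneg h2pos.le h1ν.le) hH.le
    have hcore : ∀ ρ : ℝ, 0 ≤ ρ → ∀ v ∈ curvSet Q V (m+1) ρ, v ≤ C₁ * ρ ^ (1 + ν) := by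
      intro ρ hρ v hv
      have := mem_curvSet_le Q hQo hQc (m+1) V (by exact_mod_cast hV) ν H hν hH.le
        (by exact_mod_cast hHolder) ρ hρ v hv
      rw [hC₁]
      linarith [this]
    have hknn : ∀ ρ : ℝ, 0 ≤ curv Q V (m+1) ρ := fun ρ =>
      Real.sSup_nonneg (curvSet_nonneg Q V (m+1) ρ)
    have hkb : ∀ ρ : ℝ, 0 ≤ ρ → curv Q V (m+1) ρ ≤ C₁ * ρ ^ (1 + ν) := fun ρ hρ =>
      Real.sSup_le (hcore ρ hρ) (mul_nonneg hC₁nn (Real.rpow_nonneg hρ _))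
    have hmono : MonotoneOn (curv Q V (m+1)) (Icc 0 r) := by
      intro ρ₁ hρ₁ ρ₂ hρ₂ hle
      have hbdd : BddAbove (curvSet Q V (m+1) ρ₂) :=
        ⟨C₁ * ρ₂ ^ (1 + ν), fun v hv => hcore ρ₂ hρ₂.1 v hv⟩
      exact Real.sSup_le
        (fun v hv => le_csSup hbdd (curvSet_mono Q V (m+1) hle hv)) (hknn ρ₂)
    have hInt1 : IntervalIntegrable (curv Q V (m+1)) MeasureTheory.volume 0 r := by
      apply MonotoneOn.intervalIntegrable
      rwa [uIcc_of_le hr]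
    have hIntF : IntervalIntegrable (fun t => (r - t) ^ m * curv Q V (m+1) t)
        MeasureTheory.volume 0 r :=
      hInt1.continuousOn_mul ((continuous_const.sub continuous_id).pow m).continuousOn
    have hcG : Continuous fun t : ℝ => (r - t) ^ m * (C₁ * t ^ (1 + ν)) :=
      ((continuous_const.sub continuous_id).pow m).mul
        (continuous_const.mul (Real.continuous_rpow_const h1ν.le))
    have hle : (∫ t in (0:ℝ)..r, (r - t) ^ m * curv Q V (m+1) t)
        ≤ ∫ t in (0:ℝ)..r, (r - t) ^ m * (C₁ * t ^ (1 + ν)) := by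
      apply intervalIntegral.integral_mono_on hr hIntF (hcG.intervalIntegrable _ _)
      intro t ht
      apply mul_le_mul_of_nonneg_left (hkb t ht.1)
      exact pow_nonneg (by linarith [ht.2]) m
    have hgval : (∫ t in (0:ℝ)..r, (r - t) ^ m * (C₁ * t ^ (1 + ν)))
        = C₁ * ((m.factorial : ℝ) / (∏ i ∈ Finset.range (m+1), ((1 + ν) + 1 + i))
            * r ^ ((1 + ν) + m + 1)) := by
      have hrw : ∀ t : ℝ, (r - t) ^ m * (C₁ * t ^ (1 + ν)) = C₁ * ((r - t) ^ m * t ^ (1 + ν)) :=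
        fun t => by ring
      simp_rw [hrw]
      rw [intervalIntegral.integral_const_mul, beta_int m (1 + ν) (by linarith) r hr]
    have hfac : (0:ℝ) < (m.factorial : ℝ) := by exact_mod_cast m.factorial_pos
    have hD₂ : (0:ℝ) < ∏ i ∈ Finset.range (m+1), ((1 + ν) + 1 + (i:ℝ)) := by
      apply Finset.prod_pos
      intro i _
      have : (0:ℝ) ≤ (i:ℝ) := Nat.cast_nonneg i
      linarith
    calc (1 / (m.factorial : ℝ)) * ∫ t in (0:ℝ)..r, (r - t) ^ m * curv Q V (m+1) t
        ≤ (1 / (m.factorial : ℝ)) *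
            (C₁ * ((m.factorial : ℝ) / (∏ i ∈ Finset.range (m+1), ((1 + ν) + 1 + i))
              * r ^ ((1 + ν) + m + 1))) := by
          rw [← hgval]
          exact mul_le_mul_of_nonneg_left hle (by positivity)
      _ = (2 ^ (1 - ν) / ∏ i ∈ Finset.range (m+2), ((i : ℝ) + 1 + ν)) * H
            * r ^ (((m+2 : ℕ) : ℝ) + ν) := by
          have hprod : ∏ i ∈ Finset.range (m+2), ((i : ℝ) + 1 + ν)
              = (1 + ν) * ∏ i ∈ Finset.range (m+1), ((1 + ν) + 1 + (i:ℝ)) := by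
            have hcg : ∀ i ∈ Finset.range (m+1), ((((i+1):ℕ):ℝ) + 1 + ν)
                = ((1 + ν) + 1 + (i:ℝ)) := fun i _ => by push_cast; ring
            rw [Finset.prod_range_succ', Finset.prod_congr rfl hcg]
            push_cast
            ring
          have hexp : (1 + ν) + (m:ℝ) + 1 = ((m+2 : ℕ) : ℝ) + ν := by push_cast; ring
          rw [hprod, hexp, hC₁]
          field_simp
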